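/- If φ₀ is nondegenerate, then there exist constants c, C > 0 and τ₀ ∈ (0,τ*) such that for all τ ∈ (τ₀,τ*): c·(log(1/(τ*−τ)))⁻² ≤ α(τ) ≤ C·(log(1/(τ*−τ)))⁻²; in particular α(τ) → 0 as τ → τ*⁻. -/

import Mathlib

open MeasureTheory Real Set Filter

/-- `φ₀` is nondegenerate on `Q`: its minimum `m₀` is attained at finitely many points, all in
the open interior of `Q`, and near each minimum point `φ₀ − m₀` is comparable to the squared
distance to that point. -/
def Nondegenerate (Q : Set (ℝ × ℝ)) (φ₀ : ℝ × ℝ → ℝ) (m₀ : ℝ) : Prop :=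
  ∃ S : Finset (ℝ × ℝ),
    (↑S : Set (ℝ × ℝ)) = {a ∈ Q | φ₀ a = m₀} ∧
    (↑S : Set (ℝ × ℝ)) ⊆ interior Q ∧
    ∃ r > (0 : ℝ), ∃ c₁ c₂ : ℝ, 0 < c₁ ∧ c₁ ≤ c₂ ∧
      ∀ aᵢ ∈ S, ∀ a ∈ Q, ‖a - aᵢ‖ ≤ r →
        c₁ * ‖a - aᵢ‖ ^ 2 ≤ φ₀ a - m₀ ∧ φ₀ a - m₀ ≤ c₂ * ‖a - aᵢ‖ ^ 2

/-!
With `ε = 1 + τ m₀ = (τ* − τ)(−m₀)` one has `1 + τ φ₀ = ε + τ (φ₀ − m₀)`. Near a minimum point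
`φ₀ − m₀` is comparable to `‖a − aᵢ‖²`, and away from the minimum points it is bounded below, so
`∫_Q 1 / (1 + τ φ₀)` is squeezed between integrals of `1 / (ε + K ‖a − aᵢ‖²)` over balls. In the
plane every dyadic annulus `s / 2 ≤ ‖a − aᵢ‖ < s` with `K s² ≥ ε` contributes an amount of order
`1 / K`, there are about `log₄ (1 / ε)` of them, and the remaining small ball contributes
`O(1 / K)`. Hence `F(τ)` is comparable to `log (1 / (τ* − τ))`, and `α = F⁻²` to its inverse square.
-/

open Metric Module Topology

lemma setIntegral_ball_eq_sum_annuli {X : Type*} [PseudoMetricSpace X] [MeasurableSpace X]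
    [OpensMeasurableSpace X] {μ : Measure X} {f : X → ℝ} {a : X} {ρ : ℝ} (hρ : 0 ≤ ρ)
    (hf : IntegrableOn f (ball a ρ) μ) (N : ℕ) :
    ∫ x in ball a ρ, f x ∂μ =
      ∑ j ∈ Finset.range N, ∫ x in ball a (ρ / 2 ^ j) \ ball a (ρ / 2 ^ j / 2), f x ∂μ +
        ∫ x in ball a (ρ / 2 ^ N), f x ∂μ := by
  induction N with
  | zero => simp
  | succ N ih =>
    have hsub : ball a (ρ / 2 ^ N / 2) ⊆ ball a (ρ / 2 ^ N) :=
      ball_subset_ball (half_le_self (by positivity))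
    have hfN : IntegrableOn f (ball a (ρ / 2 ^ N)) μ :=
      hf.mono_set (ball_subset_ball (div_le_self hρ (one_le_pow₀ one_le_two)))
    rw [ih, Finset.sum_range_succ, setIntegral_sdiff measurableSet_ball hfN hsub, pow_succ,
      ← div_div]
    ring

lemma measureReal_ball_pos {X : Type*} [PseudoMetricSpace X] [ProperSpace X] [MeasurableSpace X]
    (μ : Measure X) [μ.IsOpenPosMeasure] [IsFiniteMeasureOnCompacts μ] (a : X) {s : ℝ}
    (hs : 0 < s) : 0 < μ.real (ball a s) :=
  ENNReal.toReal_pos (measure_ball_pos μ a hs).ne' measure_ball_lt_top.ne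

lemma continuous_one_div_add_mul_norm_sub_sq {E : Type*} [SeminormedAddCommGroup E] {ε K : ℝ}
    (hε : 0 < ε) (hK : 0 ≤ K) (a : E) :
    Continuous fun x : E => 1 / (ε + K * ‖x - a‖ ^ 2) :=
  continuous_const.div (by fun_prop) fun x => by positivity

lemma div_two_pow_sq (ρ : ℝ) (j : ℕ) : (ρ / 2 ^ j) ^ 2 = ρ ^ 2 / 4 ^ j := by
  rw [div_pow, ← pow_mul, mul_comm, pow_mul]
  norm_num

lemma exists_pos_mul_norm_sub_sq_le {E : Type*} [NormedAddCommGroup E] {Q : Set E}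
    (hQ : IsCompact Q) {φ : E → ℝ} (hφ : ContinuousOn φ Q) {m : ℝ} (hmin : ∀ a ∈ Q, m ≤ φ a)
    {S : Finset E} (hS : (S : Set E) = {a ∈ Q | φ a = m}) (hSne : S.Nonempty) {r c : ℝ}
    (hr : 0 < r) (hc : 0 < c)
    (hloc : ∀ i ∈ S, ∀ a ∈ Q, ‖a - i‖ ≤ r → c * ‖a - i‖ ^ 2 ≤ φ a - m) :
    ∃ c' > 0, ∀ a ∈ Q, ∃ i ∈ S, c' * ‖a - i‖ ^ 2 ≤ φ a - m := by
  set T := Q \ ⋃ i ∈ S, ball i r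
  have hT : IsCompact T := hQ.diff (isOpen_biUnion fun i _ => isOpen_ball)
  obtain ⟨δ, hδ, hδT⟩ : ∃ δ, 0 < δ ∧ ∀ a ∈ T, δ ≤ φ a - m := by
    refine hT.exists_forall_le' (hφ.mono sdiff_subset |>.sub continuousOn_const) fun a ha => ?_
    refine sub_pos.2 ((hmin a ha.1).lt_of_ne fun h => ha.2 ?_)
    have haS : a ∈ (S : Set E) := hS ▸ ⟨ha.1, h.symm⟩
    exact mem_biUnion haS (mem_ball_self hr)
  obtain ⟨R, hR, hQR⟩ := hQ.isBounded.subset_closedBall_lt 0 0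
  have hdist : ∀ a ∈ Q, ∀ i ∈ S, ‖a - i‖ ≤ 2 * R := fun a ha i hi => by
    have hiQ : i ∈ Q := (hS ▸ Finset.mem_coe.2 hi : i ∈ {a ∈ Q | φ a = m}).1
    have := norm_sub_le a i
    have := mem_closedBall_zero_iff.1 (hQR ha)
    have := mem_closedBall_zero_iff.1 (hQR hiQ)
    linarith
  refine ⟨min c (δ / (2 * R) ^ 2), by positivity, fun a ha => ?_⟩
  by_cases hnear : ∃ i ∈ S, a ∈ ball i r
  · obtain ⟨i, hi, hai⟩ := hnear
    refine ⟨i, hi, le_trans ?_ (hloc i hi a ha (mem_ball_iff_norm.1 hai).le)⟩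
    gcongr
    exact min_le_left _ _
  · obtain ⟨i, hi⟩ := hSne
    have haT : a ∈ T := ⟨ha, by simpa using hnear⟩
    refine ⟨i, hi, le_trans ?_ (hδT a haT)⟩
    calc min c (δ / (2 * R) ^ 2) * ‖a - i‖ ^ 2 ≤ δ / (2 * R) ^ 2 * (2 * R) ^ 2 := by
          gcongr
          · exact min_le_right _ _
          · exact hdist a ha i hi
      _ = δ := by field_simp

lemma tendsto_log_one_div_sub_nhdsLT (b : ℝ) :
    Tendsto (fun τ => log (1 / (b - τ))) (𝓝[<] b) atTop := by
  have hsub : Tendsto (fun τ => b - τ) (𝓝[<] b) (𝓝[>] 0) := by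
    refine tendsto_nhdsWithin_iff.2
      ⟨?_, eventually_nhdsWithin_of_forall fun τ hτ => mem_Ioi.2 (sub_pos.2 hτ)⟩
    simpa using (tendsto_const_nhds.sub tendsto_id : Tendsto (fun τ => b - τ) (𝓝 b) _).mono_left
      nhdsWithin_le_nhds
  simp only [one_div]
  exact tendsto_log_atTop.comp (tendsto_inv_nhdsGT_zero.comp hsub)

lemma one_add_mul_eq_sub_mul_neg {m : ℝ} (hm : m ≠ 0) (τ : ℝ) :
    1 + τ * m = (-1 / m - τ) * -m := by
  field_simp
  ring

lemma one_add_mul_pos {m τ : ℝ} (hm : m < 0) (hτ : τ < -1 / m) : 0 < 1 + τ * m := by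
  rw [one_add_mul_eq_sub_mul_neg hm.ne]
  exact mul_pos (sub_pos.2 hτ) (neg_pos.2 hm)

lemma logb_div_one_add_mul {m τ K : ℝ} (hm : m < 0) (hτ : τ < -1 / m) (hK : 0 < K) :
    logb 4 (K / (1 + τ * m)) = (log (1 / (-1 / m - τ)) + log (K / -m)) / log 4 := by
  have hs : 0 < -1 / m - τ := sub_pos.2 hτ
  have h : K / (1 + τ * m) = 1 / (-1 / m - τ) * (K / -m) := by
    rw [one_add_mul_eq_sub_mul_neg hm.ne, div_mul_div_comm, one_mul]
  rw [logb, h, log_mul (by positivity) (div_pos hK (neg_pos.2 hm)).ne']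

lemma exists_mem_Ioo_forall_of_eventually_nhdsLT {α : Type*} [LinearOrder α]
    [TopologicalSpace α] [OrderTopology α] [DenselyOrdered α] {a b : α} {p : α → Prop}
    (h : ∀ᶠ x in 𝓝[<] b, p x) (hab : a < b) : ∃ c ∈ Ioo a b, ∀ x ∈ Ioo c b, p x := by
  obtain ⟨a', ha', ha'b⟩ := exists_between hab
  obtain ⟨c, hc, hsub⟩ := (mem_nhdsLT_iff_exists_mem_Ico_Ioo_subset ha'b).1 h
  exact ⟨c, ⟨ha'.trans_le hc.1, hc.2⟩, hsub⟩

section InverseQuadratic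

variable {E : Type*} [NormedAddCommGroup E] [NormedSpace ℝ E] [FiniteDimensional ℝ E]
  [MeasurableSpace E] [BorelSpace E] (μ : Measure E) [μ.IsAddHaarMeasure]

lemma addHaar_real_ball_of_pos (a : E) {s : ℝ} (hs : 0 < s) :
    μ.real (ball a s) = s ^ finrank ℝ E * μ.real (ball (0 : E) 1) := by
  rw [measureReal_def, Measure.addHaar_ball_of_pos μ a hs, ENNReal.toReal_mul,
    ENNReal.toReal_ofReal (by positivity), measureReal_def]

lemma addHaar_real_ball_sdiff_ball_half (hE : finrank ℝ E = 2) (a : E) {s : ℝ} (hs : 0 < s) :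
    μ.real (ball a s \ ball a (s / 2)) = 3 / 4 * s ^ 2 * μ.real (ball (0 : E) 1) := by
  rw [measureReal_sdiff (ball_subset_ball (half_le_self hs.le)) measurableSet_ball
      measure_ball_lt_top.ne, addHaar_real_ball_of_pos μ a hs,
    addHaar_real_ball_of_pos μ a (half_pos hs), hE]
  ring

variable {μ}

lemma integrableOn_ball_one_div_add_mul_norm_sub_sq {ε K : ℝ} (hε : 0 < ε) (hK : 0 ≤ K)
    (a b : E) (s : ℝ) :
    IntegrableOn (fun x : E => 1 / (ε + K * ‖x - a‖ ^ 2)) (ball b s) μ :=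
  ((continuous_one_div_add_mul_norm_sub_sq hε hK a).continuousOn.integrableOn_compact
    (isCompact_closedBall b s)).mono_set ball_subset_closedBall

lemma le_setIntegral_annulus_one_div_add_mul_norm_sub_sq (hE : finrank ℝ E = 2) {ε K s : ℝ}
    (hε : 0 < ε) (hK : 0 < K) (hs : 0 < s) (hεs : ε ≤ K * s ^ 2) (a : E) :
    3 * μ.real (ball (0 : E) 1) / (8 * K) ≤
      ∫ x in ball a s \ ball a (s / 2), 1 / (ε + K * ‖x - a‖ ^ 2) ∂μ := by
  have hlow : ∀ x ∈ ball a s \ ball a (s / 2),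
      1 / (2 * K * s ^ 2) ≤ 1 / (ε + K * ‖x - a‖ ^ 2) := by
    intro x hx
    have hxa : ‖x - a‖ ^ 2 ≤ s ^ 2 :=
      pow_le_pow_left₀ (norm_nonneg _) (mem_ball_iff_norm.1 hx.1).le 2
    gcongr
    nlinarith
  have := setIntegral_ge_of_const_le_real (measurableSet_ball.diff measurableSet_ball)
    ((measure_mono sdiff_subset).trans_lt (measure_ball_lt_top (μ := μ))).ne hlow
    ((integrableOn_ball_one_div_add_mul_norm_sub_sq hε hK.le a a s).mono_set sdiff_subset)
  rw [addHaar_real_ball_sdiff_ball_half μ hE a hs] at this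
  calc 3 * μ.real (ball (0 : E) 1) / (8 * K)
      = 1 / (2 * K * s ^ 2) * (3 / 4 * s ^ 2 * μ.real (ball (0 : E) 1)) := by
        field_simp; ring
    _ ≤ _ := this

lemma setIntegral_annulus_one_div_add_mul_norm_sub_sq_le (hE : finrank ℝ E = 2) {ε K s : ℝ}
    (hε : 0 < ε) (hK : 0 < K) (hs : 0 < s) (a : E) :
    ∫ x in ball a s \ ball a (s / 2), 1 / (ε + K * ‖x - a‖ ^ 2) ∂μ ≤
      3 * μ.real (ball (0 : E) 1) / K := by
  have hup : ∀ x ∈ ball a s \ ball a (s / 2), ‖1 / (ε + K * ‖x - a‖ ^ 2)‖ ≤ 4 / (K * s ^ 2) := by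
    intro x hx
    have hxa : (s / 2) ^ 2 ≤ ‖x - a‖ ^ 2 :=
      pow_le_pow_left₀ (by positivity) (not_lt.1 (mem_ball_iff_norm.not.1 hx.2)) 2
    rw [Real.norm_of_nonneg (by positivity), div_le_div_iff₀ (by positivity) (by positivity)]
    nlinarith
  have := (le_abs_self _).trans (norm_setIntegral_le_of_norm_le_const
    ((measure_mono sdiff_subset).trans_lt (measure_ball_lt_top (μ := μ))) hup)
  rw [addHaar_real_ball_sdiff_ball_half μ hE a hs] at this
  calc _ ≤ _ := this
    _ = 3 * μ.real (ball (0 : E) 1) / K := by field_simp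

lemma setIntegral_ball_one_div_add_mul_norm_sub_sq_le (hE : finrank ℝ E = 2) {ε K s : ℝ}
    (hε : 0 < ε) (hK : 0 ≤ K) (hs : 0 < s) (a : E) :
    ∫ x in ball a s, 1 / (ε + K * ‖x - a‖ ^ 2) ∂μ ≤ s ^ 2 * μ.real (ball (0 : E) 1) / ε := by
  have hup : ∀ x ∈ ball a s, ‖1 / (ε + K * ‖x - a‖ ^ 2)‖ ≤ 1 / ε := by
    intro x _
    rw [Real.norm_of_nonneg (by positivity)]
    gcongr
    nlinarith [norm_nonneg (x - a)]
  have := (le_abs_self _).trans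
    (norm_setIntegral_le_of_norm_le_const (measure_ball_lt_top (μ := μ)) hup)
  rw [addHaar_real_ball_of_pos μ a hs, hE] at this
  calc _ ≤ _ := this
    _ = _ := by ring

lemma le_setIntegral_ball_one_div_add_mul_norm_sub_sq (hE : finrank ℝ E = 2) {ε K ρ : ℝ}
    (hε : 0 < ε) (hK : 0 < K) (hρ : 0 < ρ) (a : E) :
    3 * μ.real (ball (0 : E) 1) / (8 * K) * logb 4 (K * ρ ^ 2 / ε) ≤
      ∫ x in ball a ρ, 1 / (ε + K * ‖x - a‖ ^ 2) ∂μ := by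
  set y := logb 4 (K * ρ ^ 2 / ε)
  have hV : 0 ≤ 3 * μ.real (ball (0 : E) 1) / (8 * K) := by positivity
  have hnonneg : ∀ s, 0 ≤ ∫ x in ball a s, 1 / (ε + K * ‖x - a‖ ^ 2) ∂μ := fun s =>
    setIntegral_nonneg measurableSet_ball fun x _ => by positivity
  rcases lt_or_ge y 0 with hy | hy
  · exact (mul_nonpos_of_nonneg_of_nonpos hV hy.le).trans (hnonneg ρ)
  set N := ⌊y⌋₊ + 1
  have hyN : y ≤ N := by simpa [N] using (Nat.lt_floor_add_one y).le
  have hannulus : ∀ j ∈ Finset.range N, 3 * μ.real (ball (0 : E) 1) / (8 * K) ≤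
      ∫ x in ball a (ρ / 2 ^ j) \ ball a (ρ / 2 ^ j / 2), 1 / (ε + K * ‖x - a‖ ^ 2) ∂μ := by
    intro j hj
    have hjy : (j : ℝ) ≤ y :=
      (Nat.cast_le.2 (Nat.lt_succ_iff.1 (Finset.mem_range.1 hj))).trans (Nat.floor_le hy)
    have h4j : (4 : ℝ) ^ j ≤ K * ρ ^ 2 / ε := by
      rw [← Real.rpow_natCast (4 : ℝ) j]
      exact (Real.le_logb_iff_rpow_le (by norm_num) (by positivity)).1 hjy
    refine le_setIntegral_annulus_one_div_add_mul_norm_sub_sq hE hε hK (by positivity) ?_ a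
    rw [div_two_pow_sq, mul_div_assoc', le_div_iff₀ (by positivity)]
    rwa [le_div_iff₀ hε, mul_comm] at h4j
  calc 3 * μ.real (ball (0 : E) 1) / (8 * K) * y
      ≤ N • (3 * μ.real (ball (0 : E) 1) / (8 * K)) := by
        rw [nsmul_eq_mul, mul_comm]
        gcongr
    _ ≤ _ := by simpa using Finset.card_nsmul_le_sum _ _ _ hannulus
    _ ≤ _ := le_add_of_nonneg_right (hnonneg _)
    _ = _ := (setIntegral_ball_eq_sum_annuli hρ.le
      (integrableOn_ball_one_div_add_mul_norm_sub_sq hε hK.le a a ρ) N).symm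

lemma setIntegral_ball_one_div_add_mul_norm_sub_sq_le_logb (hE : finrank ℝ E = 2) {ε K r : ℝ}
    (hε : 0 < ε) (hK : 0 < K) (hr : 0 < r) (hεr : ε ≤ K * r ^ 2) (a : E) :
    ∫ x in ball a r, 1 / (ε + K * ‖x - a‖ ^ 2) ∂μ ≤
      3 * μ.real (ball (0 : E) 1) / K * logb 4 (K * r ^ 2 / ε) +
        4 * μ.real (ball (0 : E) 1) / K := by
  set V := μ.real (ball (0 : E) 1)
  set y := logb 4 (K * r ^ 2 / ε)
  have hy : 0 ≤ y := Real.logb_nonneg (by norm_num) ((le_div_iff₀ hε).2 (by linarith))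
  set M := ⌈y⌉₊
  have h4M : K * r ^ 2 / ε ≤ (4 : ℝ) ^ M := by
    rw [← Real.rpow_natCast (4 : ℝ) M]
    exact (Real.logb_le_iff_le_rpow (by norm_num) (by positivity)).1 (Nat.le_ceil y)
  have hterm : (r / 2 ^ M) ^ 2 * V / ε ≤ V / K := by
    have hM : K * r ^ 2 / 4 ^ M ≤ ε := by
      rwa [div_le_iff₀ hε, ← div_le_iff₀' (by positivity)] at h4M
    have : 0 ≤ V := measureReal_nonneg
    rw [div_two_pow_sq, div_le_div_iff₀ hε hK]
    calc r ^ 2 / 4 ^ M * V * K = K * r ^ 2 / 4 ^ M * V := by ring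
      _ ≤ ε * V := by gcongr
      _ = V * ε := mul_comm _ _
  calc ∫ x in ball a r, 1 / (ε + K * ‖x - a‖ ^ 2) ∂μ
      = ∑ j ∈ Finset.range M, ∫ x in ball a (r / 2 ^ j) \ ball a (r / 2 ^ j / 2),
          1 / (ε + K * ‖x - a‖ ^ 2) ∂μ + ∫ x in ball a (r / 2 ^ M), 1 / (ε + K * ‖x - a‖ ^ 2) ∂μ :=
        setIntegral_ball_eq_sum_annuli hr.le
          (integrableOn_ball_one_div_add_mul_norm_sub_sq hε hK.le a a r) M
    _ ≤ M • (3 * V / K) + V / K := by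
        gcongr
        · simpa using Finset.sum_le_card_nsmul (Finset.range M) _ _ fun j _ =>
            setIntegral_annulus_one_div_add_mul_norm_sub_sq_le (μ := μ) hE hε hK
              (s := r / 2 ^ j) (by positivity) a
        · exact (setIntegral_ball_one_div_add_mul_norm_sub_sq_le hE hε hK.le (by positivity)
            a).trans hterm
    _ ≤ (y + 1) * (3 * V / K) + V / K := by
        rw [nsmul_eq_mul]
        gcongr
        exact (Nat.ceil_lt_add_one hy).le
    _ = 3 * V / K * y + 4 * V / K := by ring

lemma le_setIntegral_one_div_add (hE : finrank ℝ E = 2) {Q : Set E} (hQ : MeasurableSet Q)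
    {g : E → ℝ} {ε K ρ : ℝ} (hε : 0 < ε) (hK : 0 < K) (hρ : 0 < ρ) {a : E} (hball : ball a ρ ⊆ Q)
    (hint : IntegrableOn (fun x => 1 / (ε + g x)) Q μ) (hg : ∀ x ∈ Q, 0 ≤ g x)
    (hgK : ∀ x ∈ ball a ρ, g x ≤ K * ‖x - a‖ ^ 2) :
    3 * μ.real (ball (0 : E) 1) / (8 * K) * logb 4 (K * ρ ^ 2 / ε) ≤
      ∫ x in Q, 1 / (ε + g x) ∂μ :=
  calc _ ≤ ∫ x in ball a ρ, 1 / (ε + K * ‖x - a‖ ^ 2) ∂μ :=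
        le_setIntegral_ball_one_div_add_mul_norm_sub_sq hE hε hK hρ a
    _ ≤ ∫ x in ball a ρ, 1 / (ε + g x) ∂μ :=
        setIntegral_mono_on (integrableOn_ball_one_div_add_mul_norm_sub_sq hε hK.le a a ρ)
          (hint.mono_set hball) measurableSet_ball fun x hx => by
            have := hg x (hball hx)
            gcongr
            exact hgK x hx
    _ ≤ ∫ x in Q, 1 / (ε + g x) ∂μ :=
        setIntegral_mono_set hint ((ae_restrict_iff' hQ).2 (ae_of_all _ fun x hx => by
          have := hg x hx
          positivity)) hball.eventuallyLE

lemma setIntegral_one_div_add_le (hE : finrank ℝ E = 2) {Q : Set E} (hQ : MeasurableSet Q)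
    {S : Finset E} {g : E → ℝ} {ε K R : ℝ} (hε : 0 < ε) (hK : 0 < K) (hR : 0 < R)
    (hεR : ε ≤ K * R ^ 2) (hQS : ∀ i ∈ S, Q ⊆ ball i R)
    (hg : ∀ x ∈ Q, ∃ i ∈ S, K * ‖x - i‖ ^ 2 ≤ g x) :
    ∫ x in Q, 1 / (ε + g x) ∂μ ≤
      S.card * (3 * μ.real (ball (0 : E) 1) / K * logb 4 (K * R ^ 2 / ε) +
        4 * μ.real (ball (0 : E) 1) / K) := by
  have hfi : ∀ i ∈ S, IntegrableOn (fun x => 1 / (ε + K * ‖x - i‖ ^ 2)) Q μ := fun i hi =>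
    (integrableOn_ball_one_div_add_mul_norm_sub_sq hε hK.le i i R).mono_set (hQS i hi)
  have hpt : ∀ x ∈ Q, 1 / (ε + g x) ≤ ∑ i ∈ S, 1 / (ε + K * ‖x - i‖ ^ 2) := fun x hx => by
    obtain ⟨i, hi, hgi⟩ := hg x hx
    calc 1 / (ε + g x) ≤ 1 / (ε + K * ‖x - i‖ ^ 2) := by gcongr
      _ ≤ _ := Finset.single_le_sum (f := fun i => 1 / (ε + K * ‖x - i‖ ^ 2))
          (fun j _ => by positivity) hi
  calc ∫ x in Q, 1 / (ε + g x) ∂μ ≤ ∫ x in Q, ∑ i ∈ S, 1 / (ε + K * ‖x - i‖ ^ 2) ∂μ := by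
        refine integral_mono_of_nonneg ((ae_restrict_iff' hQ).2 (ae_of_all _ fun x hx => ?_))
          (integrable_finsetSum S hfi) ((ae_restrict_iff' hQ).2 (ae_of_all _ hpt))
        obtain ⟨i, -, hgi⟩ := hg x hx
        have : 0 ≤ g x := le_trans (by positivity) hgi
        positivity
    _ = ∑ i ∈ S, ∫ x in Q, 1 / (ε + K * ‖x - i‖ ^ 2) ∂μ := integral_finsetSum S hfi
    _ ≤ ∑ i ∈ S, ∫ x in ball i R, 1 / (ε + K * ‖x - i‖ ^ 2) ∂μ :=
        Finset.sum_le_sum fun i hi => setIntegral_mono_set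
          (integrableOn_ball_one_div_add_mul_norm_sub_sq hε hK.le i i R)
          (ae_of_all _ fun x => by positivity) (hQS i hi).eventuallyLE
    _ ≤ S.card • (3 * μ.real (ball (0 : E) 1) / K * logb 4 (K * R ^ 2 / ε) +
          4 * μ.real (ball (0 : E) 1) / K) :=
        Finset.sum_le_card_nsmul _ _ _ fun i _ =>
          setIntegral_ball_one_div_add_mul_norm_sub_sq_le_logb hE hε hK hR hεR i
    _ = _ := nsmul_eq_mul _ _

lemma eventually_le_setIntegral_one_div_one_add_mul (hE : finrank ℝ E = 2) {Q : Set E}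
    (hQ : IsCompact Q) {φ : E → ℝ} (hφ : ContinuousOn φ Q) {m : ℝ} (hm : m < 0)
    (hmin : ∀ a ∈ Q, m ≤ φ a) {a₀ : E} (ha₀ : a₀ ∈ interior Q) {r c : ℝ} (hr : 0 < r)
    (hc : 0 < c)
    (hloc : ∀ x ∈ Q, ‖x - a₀‖ ≤ r → φ x - m ≤ c * ‖x - a₀‖ ^ 2) :
    ∃ A > 0, ∃ B, ∀ᶠ τ in 𝓝[<] (-1 / m),
      A * log (1 / (-1 / m - τ)) + B ≤ ∫ x in Q, 1 / (1 + τ * φ x) ∂μ := by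
  have hτs : 0 < -1 / m := div_pos_of_neg_of_neg (by norm_num) hm
  obtain ⟨ρ₀, hρ₀, hρ₀Q⟩ := Metric.isOpen_iff.1 isOpen_interior a₀ ha₀
  set ρ := min ρ₀ r
  have hρ : 0 < ρ := lt_min hρ₀ hr
  have hball : ball a₀ ρ ⊆ Q :=
    (ball_subset_ball (min_le_left _ _)).trans (hρ₀Q.trans interior_subset)
  set K := -1 / m * c
  have hK : 0 < K := by positivity
  have hV := measureReal_ball_pos μ (0 : E) one_pos
  set A := 3 * μ.real (ball (0 : E) 1) / (8 * K) / log 4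
  refine ⟨A, by positivity, A * log (K * ρ ^ 2 / -m), ?_⟩
  filter_upwards [Ioo_mem_nhdsLT hτs] with τ hτ
  have hε := one_add_mul_pos hm hτ.2
  have hden : ∀ x, 1 + τ * φ x = (1 + τ * m) + τ * (φ x - m) := fun x => by ring
  have hg : ∀ x ∈ Q, 0 ≤ τ * (φ x - m) := fun x hx =>
    mul_nonneg hτ.1.le (sub_nonneg.2 (hmin x hx))
  have hint : IntegrableOn (fun x => 1 / ((1 + τ * m) + τ * (φ x - m))) Q μ :=
    (continuousOn_const.div (continuousOn_const.add
      (continuousOn_const.mul (hφ.sub continuousOn_const))) fun x hx =>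
        (add_pos_of_pos_of_nonneg hε (hg x hx)).ne').integrableOn_compact hQ
  simp_rw [hden]
  refine le_of_eq_of_le ?_ (le_setIntegral_one_div_add hE hQ.measurableSet hε hK hρ hball hint hg
    fun x hx => ?_)
  · rw [logb_div_one_add_mul hm hτ.2 (by positivity)]
    ring
  · calc τ * (φ x - m) ≤ -1 / m * (c * ‖x - a₀‖ ^ 2) :=
          mul_le_mul hτ.2.le (hloc x (hball hx) ((mem_ball_iff_norm.1 hx).le.trans
            (min_le_right _ _))) (sub_nonneg.2 (hmin x (hball hx))) hτs.le
      _ = K * ‖x - a₀‖ ^ 2 := by ring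

lemma eventually_setIntegral_one_div_one_add_mul_le (hE : finrank ℝ E = 2) {Q : Set E}
    (hQ : IsCompact Q) {φ : E → ℝ} {m : ℝ} (hm : m < 0) {S : Finset E} (hSne : S.Nonempty)
    (hSQ : (S : Set E) ⊆ Q) {c : ℝ} (hc : 0 < c)
    (hquad : ∀ x ∈ Q, ∃ i ∈ S, c * ‖x - i‖ ^ 2 ≤ φ x - m) :
    ∃ A > 0, ∃ B, ∀ᶠ τ in 𝓝[<] (-1 / m),
      ∫ x in Q, 1 / (1 + τ * φ x) ∂μ ≤ A * log (1 / (-1 / m - τ)) + B := by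
  have hτs : 0 < -1 / m := div_pos_of_neg_of_neg (by norm_num) hm
  obtain ⟨R, hR, hQR⟩ := hQ.isBounded.subset_ball_lt 0 0
  have hQS : ∀ i ∈ S, Q ⊆ ball i (2 * R) := fun i hi x hx => by
    have hx := mem_ball_zero_iff.1 (hQR hx)
    have hi := mem_ball_zero_iff.1 (hQR (hSQ hi))
    rw [mem_ball_iff_norm]
    linarith [norm_sub_le x i]
  set K := -1 / m / 2 * c
  have hK : 0 < K := by positivity
  have hV := measureReal_ball_pos μ (0 : E) one_pos
  set A := S.card * (3 * μ.real (ball (0 : E) 1) / K) / log 4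
  refine ⟨A, by have := hSne.card_pos; positivity,
    A * log (K * (2 * R) ^ 2 / -m) + S.card * (4 * μ.real (ball (0 : E) 1) / K), ?_⟩
  have hε_lim : Tendsto (fun τ => 1 + τ * m) (𝓝[<] (-1 / m)) (𝓝 0) := by
    have := (by fun_prop : Continuous fun τ : ℝ => 1 + τ * m).tendsto (-1 / m)
    rw [div_mul_cancel₀ _ hm.ne, add_neg_cancel] at this
    exact this.mono_left nhdsWithin_le_nhds
  filter_upwards [Ioo_mem_nhdsLT (half_lt_self hτs),
    hε_lim.eventually (gt_mem_nhds (by positivity : (0 : ℝ) < K * (2 * R) ^ 2))] with τ hτ hεR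
  have hε := one_add_mul_pos hm hτ.2
  have hden : ∀ x, 1 + τ * φ x = (1 + τ * m) + τ * (φ x - m) := fun x => by ring
  simp_rw [hden]
  refine (setIntegral_one_div_add_le hE hQ.measurableSet hε hK (by positivity) hεR.le hQS
    fun x hx => ?_).trans_eq ?_
  · obtain ⟨i, hi, hxi⟩ := hquad x hx
    refine ⟨i, hi, ?_⟩
    calc K * ‖x - i‖ ^ 2 = -1 / m / 2 * (c * ‖x - i‖ ^ 2) := by ring
      _ ≤ τ * (φ x - m) := mul_le_mul hτ.1.le hxi (by positivity) (by linarith [hτ.1])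
  · rw [logb_div_one_add_mul hm hτ.2 (by positivity)]
    ring

end InverseQuadratic

lemma inv_sq_bounds_of_affine_bounds {ι : Type*} {l : Filter ι} {Λ F : ι → ℝ}
    (hΛ : Tendsto Λ l atTop) {k A B A' B' : ℝ} (hk : 0 < k) (hA : 0 < A) (hA' : 0 < A')
    (hlow : ∀ᶠ x in l, A * Λ x + B ≤ F x) (hup : ∀ᶠ x in l, F x ≤ A' * Λ x + B') :
    (∃ c > 0, ∃ C > 0, ∀ᶠ x in l,
      c * (Λ x ^ 2)⁻¹ ≤ ((k * F x) ^ 2)⁻¹ ∧ ((k * F x) ^ 2)⁻¹ ≤ C * (Λ x ^ 2)⁻¹) ∧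
    Tendsto (fun x => ((k * F x) ^ 2)⁻¹) l (𝓝 0) := by
  have hsandwich : ∀ᶠ x in l,
      0 < Λ x ∧ k * A / 2 * Λ x ≤ k * F x ∧ k * F x ≤ 2 * k * A' * Λ x := by
    filter_upwards [hlow, hup, hΛ.eventually_gt_atTop 0, hΛ.eventually_ge_atTop (-2 * B / A),
      hΛ.eventually_ge_atTop (B' / A')] with x hlow hup hpos hB hB'
    rw [div_le_iff₀ hA] at hB
    rw [div_le_iff₀ hA'] at hB'
    refine ⟨hpos, ?_, ?_⟩ <;> nlinarith
  refine ⟨⟨((2 * k * A') ^ 2)⁻¹, by positivity, ((k * A / 2) ^ 2)⁻¹, by positivity, ?_⟩, ?_⟩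
  · filter_upwards [hsandwich] with x ⟨hpos, hlow, hup⟩
    have hlow_pos : 0 < k * A / 2 * Λ x := mul_pos (by positivity) hpos
    have hkF_pos : 0 < k * F x := hlow_pos.trans_le hlow
    rw [← mul_inv, ← mul_inv, ← mul_pow, ← mul_pow]
    exact ⟨inv_anti₀ (pow_pos hkF_pos 2) (pow_le_pow_left₀ hkF_pos.le hup 2),
      inv_anti₀ (pow_pos hlow_pos 2) (pow_le_pow_left₀ hlow_pos.le hlow 2)⟩
  · have hkF : Tendsto (fun x => k * F x) l atTop :=
      tendsto_atTop_mono' l (hsandwich.mono fun x hx => hx.2.1)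
        (hΛ.const_mul_atTop (by positivity))
    exact tendsto_inv_atTop_zero.comp ((tendsto_pow_atTop two_ne_zero).comp hkF)

theorem stmt_15_general
    (L : ℝ) (hL : 0 < L)
    (Q : Set (ℝ × ℝ)) (hQ : Q = Set.Icc (0, 0) (L, L))
    (φ₀ : ℝ × ℝ → ℝ) (hφcont : ContinuousOn φ₀ Q)
    (m₀ : ℝ) (hmin : ∀ a ∈ Q, m₀ ≤ φ₀ a) (hatt : ∃ a ∈ Q, φ₀ a = m₀)
    (hm₀ : m₀ < 0)
    (τstar : ℝ) (hτstar : τstar = -1 / m₀)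
    (F α : ℝ → ℝ)
    (hF : ∀ τ ∈ Set.Ico 0 τstar, F τ = (1 / L ^ 2) * ∫ a in Q, 1 / (1 + τ * φ₀ a))
    (hα : ∀ τ ∈ Set.Ico 0 τstar, α τ = ((F τ) ^ 2)⁻¹)
    (hnd : Nondegenerate Q φ₀ m₀) :
    (∃ c > (0 : ℝ), ∃ C > (0 : ℝ), ∃ τ₀ ∈ Set.Ioo 0 τstar,
      ∀ τ ∈ Set.Ioo τ₀ τstar,
        c * ((Real.log (1 / (τstar - τ))) ^ 2)⁻¹ ≤ α τ ∧
        α τ ≤ C * ((Real.log (1 / (τstar - τ))) ^ 2)⁻¹) ∧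
    Filter.Tendsto α (nhdsWithin τstar (Set.Ico 0 τstar)) (nhds 0) := by
  obtain ⟨S, hS, hSint, r, hr, c₁, c₂, hc₁, hc₁₂, hbd⟩ := hnd
  obtain ⟨a₀, ha₀Q, ha₀⟩ := hatt
  have ha₀S : a₀ ∈ S := by rw [← Finset.mem_coe, hS]; exact ⟨ha₀Q, ha₀⟩
  have hQc : IsCompact Q := hQ ▸ isCompact_Icc
  have hdim : finrank ℝ (ℝ × ℝ) = 2 := by simp
  obtain ⟨A, hA, B, hlow⟩ := eventually_le_setIntegral_one_div_one_add_mul (μ := volume) hdim hQc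
    hφcont hm₀ hmin (hSint ha₀S) hr (hc₁.trans_le hc₁₂) fun x hx h => (hbd a₀ ha₀S x hx h).2
  obtain ⟨c₀, hc₀, hquad⟩ := exists_pos_mul_norm_sub_sq_le hQc hφcont hmin hS ⟨a₀, ha₀S⟩ hr hc₁
    fun i hi a ha h => (hbd i hi a ha h).1
  obtain ⟨A', hA', B', hup⟩ := eventually_setIntegral_one_div_one_add_mul_le (μ := volume) hdim hQc
    hm₀ ⟨a₀, ha₀S⟩ (by rw [hS]; exact sep_subset _ _) hc₀ hquad
  subst hτstar
  have hτs : 0 < -1 / m₀ := div_pos_of_neg_of_neg (by norm_num) hm₀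
  have hαF : ∀ᶠ τ in 𝓝[<] (-1 / m₀), α τ = ((1 / L ^ 2 * ∫ a in Q, 1 / (1 + τ * φ₀ a)) ^ 2)⁻¹ := by
    filter_upwards [Ioo_mem_nhdsLT hτs] with τ hτ
    rw [hα τ ⟨hτ.1.le, hτ.2⟩, hF τ ⟨hτ.1.le, hτ.2⟩]
  obtain ⟨⟨c, hc, C, hC, hbounds⟩, hlim⟩ := inv_sq_bounds_of_affine_bounds
    (tendsto_log_one_div_sub_nhdsLT _) (one_div_pos.2 (pow_pos hL 2)) hA hA' hlow hup
  obtain ⟨τ₀, hτ₀, hτ₀_bounds⟩ := exists_mem_Ioo_forall_of_eventually_nhdsLT (hbounds.and hαF) hτs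
  refine ⟨⟨c, hc, C, hC, τ₀, hτ₀, fun τ hτ => ?_⟩, ?_⟩
  · obtain ⟨h, hατ⟩ := hτ₀_bounds τ hτ
    rwa [hατ]
  · rw [nhdsWithin_Ico_eq_nhdsLT hτs]
    exact hlim.congr' (hαF.mono fun τ h => h.symm)

/-- If `φ₀` is nondegenerate, there exist `c, C > 0` and `τ₀ ∈ (0,τ*)` with
`c·(log(1/(τ*−τ)))⁻² ≤ α(τ) ≤ C·(log(1/(τ*−τ)))⁻²` for all `τ ∈ (τ₀,τ*)`; in particular
`α(τ) → 0` as `τ → τ*⁻`. -/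
theorem stmt_15
    (L : ℝ) (hL : 0 < L)
    (Q : Set (ℝ × ℝ)) (hQ : Q = Set.Icc (0, 0) (L, L))
    (φ₀ : ℝ × ℝ → ℝ) (hφcont : ContinuousOn φ₀ Q)
    (hmean : ∫ a in Q, φ₀ a = 0)
    (m₀ : ℝ) (hmin : ∀ a ∈ Q, m₀ ≤ φ₀ a) (hatt : ∃ a ∈ Q, φ₀ a = m₀)
    (hm₀ : m₀ < 0)
    (τstar : ℝ) (hτstar : τstar = -1 / m₀)
    (F α : ℝ → ℝ)
    (hF : ∀ τ ∈ Set.Ico 0 τstar, F τ = (1 / L ^ 2) * ∫ a in Q, 1 / (1 + τ * φ₀ a))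
    (hα : ∀ τ ∈ Set.Ico 0 τstar, α τ = ((F τ) ^ 2)⁻¹)
    (hnd : Nondegenerate Q φ₀ m₀) :
    (∃ c > (0 : ℝ), ∃ C > (0 : ℝ), ∃ τ₀ ∈ Set.Ioo 0 τstar,
      ∀ τ ∈ Set.Ioo τ₀ τstar,
        c * ((Real.log (1 / (τstar - τ))) ^ 2)⁻¹ ≤ α τ ∧
        α τ ≤ C * ((Real.log (1 / (τstar - τ))) ^ 2)⁻¹) ∧
    Filter.Tendsto α (nhdsWithin τstar (Set.Ico 0 τstar)) (nhds 0) :=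
  stmt_15_general L hL Q hQ φ₀ hφcont m₀ hmin hatt hm₀ τstar hτstar F α hF hα hnd
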